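/- arXiv:1204.4571 — 3 statements merged into one kernel-verified Lean document; each statement's English description precedes it below -/
import Mathlib

section
/- For the k-dimensional backward heat kernel ρ_{(y,s)}(x,t) = (4π(s-t))^{-k/2} exp(-|x-y|²/(4(s-t))) with t < s, and for any k-dimensional subspace S of ℝⁿ (identified with its orthogonal projection), the identity (∇²ρ)·S + |(∇ρ)^⊥|²/ρ + ∂ρ/∂t = 0 holds, where (∇ρ)^⊥ = (I-S)(∇ρ), ∇ denotes the spatial gradient, ∇²ρ the spatial Hessian, and A·S = trace(Aᵀ S). -/
/-!
With `τ = s - t` and `v = x - y`, differentiating the Gaussian gives `∇ρ = -ρ v / (2τ)`,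
`∇²ρ = ρ (v vᵀ / (4τ²) - I / (2τ))` and `∂ₜρ = ρ (k / (2τ) - |v|² / (4τ²))`.
For an orthogonal projection `S` of trace `k` we have `|(I - S) v|² = |v|² - ⟨S v, v⟩`, so the three
terms of the identity are `ρ / (4τ²)` times `⟨S v, v⟩ - 2kτ`, `|v|² - ⟨S v, v⟩` and `2kτ - |v|²`.
-/

open Real Matrix

section Matrix

variable {R : Type*} {m p : Type*} [Fintype m] [Fintype p]

theorem trace_transpose_mul_eq_sum_sum [NonUnitalNonAssocSemiring R] (A B : Matrix m p R) :
    trace (Aᵀ * B) = ∑ i, ∑ j, A i j * B i j := by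
  rw [Finset.sum_comm]
  rfl

theorem trace_vecMulVec_mul [CommSemiring R] (v w : m → R) (S : Matrix m m R) :
    trace (vecMulVec v w * S) = w ⬝ᵥ S *ᵥ v := by
  rw [vecMulVec_mul, trace_vecMulVec, dotProduct_comm, dotProduct_mulVec]

theorem Matrix.IsSymm.dotProduct_sub_mulVec_self [CommRing R] {S : Matrix m m R}
    (hS : S.IsSymm) (hSS : S * S = S) (v : m → R) :
    (v - S *ᵥ v) ⬝ᵥ (v - S *ᵥ v) = v ⬝ᵥ v - v ⬝ᵥ S *ᵥ v := by
  have hself : ∀ w u, S *ᵥ w ⬝ᵥ u = w ⬝ᵥ S *ᵥ u := fun w u => by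
    rw [dotProduct_comm, dotProduct_mulVec, ← hS.eq, vecMul_transpose, hS.eq, dotProduct_comm]
  have hsq : S *ᵥ v ⬝ᵥ S *ᵥ v = v ⬝ᵥ S *ᵥ v := by
    rw [hself, mulVec_mulVec, hSS]
  simp only [sub_dotProduct, dotProduct_sub, hsq, hself]
  ring

end Matrix

section HeatKernel

variable {ι : Type*}

section Coordinates

variable [DecidableEq ι]

noncomputable def partialDeriv (f : (ι → ℝ) → ℝ) (i : ι) (z : ι → ℝ) : ℝ :=
  deriv (fun b => f (Function.update z i b)) (z i)

noncomputable def coordGradient (f : (ι → ℝ) → ℝ) (z : ι → ℝ) : ι → ℝ :=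
  fun i => partialDeriv f i z

noncomputable def coordHessian (f : (ι → ℝ) → ℝ) (z : ι → ℝ) : Matrix ι ι ℝ :=
  of fun i j => partialDeriv (partialDeriv f j) i z

theorem hasDerivAt_update_apply (z : ι → ℝ) (i j : ι) (b : ℝ) :
    HasDerivAt (fun b => Function.update z i b j) ((Pi.single i 1 : ι → ℝ) j) b :=
  hasDerivAt_pi.1 (hasDerivAt_update z i b) j

end Coordinates

variable [Fintype ι]

/-- `heatKernel d y τ z` is `ρ_{(y,s)}(z, s - τ)` in dimension `d`. -/
noncomputable def heatKernel (d : ℝ) (y : ι → ℝ) (τ : ℝ) (z : ι → ℝ) : ℝ :=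
  (4 * π * τ) ^ (-d / 2) * exp (-(∑ i, (z i - y i) ^ 2) / (4 * τ))

theorem hasDerivAt_heatKernel_time (d : ℝ) (y z : ι → ℝ) {τ : ℝ} (hτ : 0 < τ) :
    HasDerivAt (fun τ => heatKernel d y τ z)
      (heatKernel d y τ z * ((z - y) ⬝ᵥ (z - y) / (4 * τ ^ 2) - d / (2 * τ))) τ := by
  have hQ : (z - y) ⬝ᵥ (z - y) = ∑ i, (z i - y i) ^ 2 := by simp [dotProduct, sq]
  set Q := ∑ i, (z i - y i) ^ 2
  have hpow : HasDerivAt (fun τ => (4 * π * τ) ^ (-d / 2))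
      (4 * π * (-d / 2) * (4 * π * τ) ^ (-d / 2 - 1)) τ := by
    simpa using
      ((hasDerivAt_id' τ).const_mul (4 * π)).rpow_const (p := -d / 2) (Or.inl (by positivity))
  have hexp : HasDerivAt (fun τ => -Q / (4 * τ)) (Q / (4 * τ ^ 2)) τ := by
    refine (((hasDerivAt_id' τ).const_mul 4).inv (by positivity) |>.const_mul (-Q)).congr_deriv ?_
    field_simp
  refine (hpow.mul hexp.exp).congr_deriv ?_
  rw [hQ, rpow_sub (by positivity), rpow_one, heatKernel]
  field_simp
  ring

variable [DecidableEq ι]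

theorem hasDerivAt_heatKernel_update (d τ : ℝ) (y z : ι → ℝ) (i : ι) :
    HasDerivAt (fun b => heatKernel d y τ (Function.update z i b))
      (heatKernel d y τ z * (-(z i - y i) / (2 * τ))) (z i) := by
  have hsq : HasDerivAt (fun b => ∑ j, (Function.update z i b j - y j) ^ 2)
      (2 * (z i - y i)) (z i) := by
    refine (HasDerivAt.fun_sum fun j _ =>
      ((hasDerivAt_update_apply z i j (z i)).sub_const (y j)).fun_pow 2).congr_deriv ?_
    simp [Pi.single_apply]
  refine ((hsq.fun_neg.div_const (4 * τ)).exp.const_mul ((4 * π * τ) ^ (-d / 2))).congr_deriv ?_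
  simp only [heatKernel, Function.update_eq_self]
  ring

theorem partialDeriv_heatKernel (d τ : ℝ) (y z : ι → ℝ) (i : ι) :
    partialDeriv (heatKernel d y τ) i z = heatKernel d y τ z * (-(z i - y i) / (2 * τ)) :=
  (hasDerivAt_heatKernel_update d τ y z i).deriv

theorem coordGradient_heatKernel (d τ : ℝ) (y z : ι → ℝ) :
    coordGradient (heatKernel d y τ) z = (-heatKernel d y τ z / (2 * τ)) • (z - y) := by
  ext i
  simp only [coordGradient, partialDeriv_heatKernel, Pi.smul_apply, Pi.sub_apply, smul_eq_mul]
  ring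

theorem partialDeriv_partialDeriv_heatKernel (d τ : ℝ) (y z : ι → ℝ) (i j : ι) :
    partialDeriv (partialDeriv (heatKernel d y τ) j) i z =
      heatKernel d y τ z *
        ((z i - y i) * (z j - y j) / (4 * τ ^ 2) - (Pi.single i 1 : ι → ℝ) j / (2 * τ)) := by
  have hprod := (hasDerivAt_heatKernel_update d τ y z i).fun_mul
    (((hasDerivAt_update_apply z i j (z i)).sub_const (y j)).fun_neg.div_const (2 * τ))
  rw [show partialDeriv (heatKernel d y τ) j = fun w => heatKernel d y τ w * (-(w j - y j) / (2 * τ))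
    from funext fun w => partialDeriv_heatKernel d τ y w j, partialDeriv, hprod.deriv,
    Function.update_eq_self]
  ring

theorem coordHessian_heatKernel (d τ : ℝ) (y z : ι → ℝ) :
    coordHessian (heatKernel d y τ) z =
      heatKernel d y τ z • ((4 * τ ^ 2)⁻¹ • vecMulVec (z - y) (z - y) - (2 * τ)⁻¹ • 1) := by
  ext i j
  simp only [coordHessian, of_apply, partialDeriv_partialDeriv_heatKernel, Matrix.smul_apply,
    Matrix.sub_apply, vecMulVec_apply, Pi.sub_apply, one_apply, Pi.single_apply, eq_comm (a := j),
    smul_eq_mul]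
  ring

end HeatKernel

theorem backward_heat_kernel_identity_general (k n : ℕ)
    (y : Fin n → ℝ) (s : ℝ)
    (ρ : (Fin n → ℝ) → ℝ → ℝ)
    (hρ : ∀ x t, ρ x t =
      (4 * π * (s - t)) ^ (-(k : ℝ) / 2) * Real.exp (-(∑ i, (x i - y i) ^ 2) / (4 * (s - t))))
    (S : Matrix (Fin n) (Fin n) ℝ)
    (hSsymm : S.IsSymm) (hSproj : S * S = S) (hStrace : S.trace = (k : ℝ))
    (x : Fin n → ℝ) (t : ℝ) (hts : t < s) :
    (∑ i, ∑ j, deriv (fun a => deriv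
        (fun b => ρ (Function.update (Function.update x i a) j b) t)
        ((Function.update x i a) j)) (x i) * S i j)
      + (∑ i, ((deriv (fun b => ρ (Function.update x i b) t) (x i))
          - ∑ j, S i j * (deriv (fun b => ρ (Function.update x j b) t) (x j))) ^ 2) / ρ x t
      + deriv (fun τ => ρ x τ) t = 0 := by
  obtain rfl : ρ = fun x t => heatKernel k y (s - t) x := funext₂ hρ
  set K := heatKernel k y (s - t)
  have hτ : 0 < s - t := sub_pos.2 hts
  have hK : K x ≠ 0 := by unfold K heatKernel; positivity
  have htime : HasDerivAt (fun t => heatKernel k y (s - t) x)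
      (K x * (k / (2 * (s - t)) - (x - y) ⬝ᵥ (x - y) / (4 * (s - t) ^ 2))) t := by
    refine ((hasDerivAt_heatKernel_time k y x hτ).comp t
      ((hasDerivAt_id' t).const_sub s)).congr_deriv ?_
    ring
  have key : trace ((coordHessian K x)ᵀ * S)
      + (coordGradient K x - S *ᵥ coordGradient K x) ⬝ᵥ (coordGradient K x - S *ᵥ coordGradient K x)
        / K x
      + deriv (fun t => heatKernel k y (s - t) x) t = 0 := by
    rw [coordGradient_heatKernel, mulVec_smul, ← smul_sub, smul_dotProduct, dotProduct_smul,
      hSsymm.dotProduct_sub_mulVec_self hSproj, coordHessian_heatKernel, htime.deriv]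
    simp only [transpose_smul, transpose_sub, transpose_vecMulVec, transpose_one, Matrix.smul_mul,
      Matrix.sub_mul, one_mul, trace_smul, trace_sub, trace_vecMulVec_mul, hStrace, smul_eq_mul]
    field_simp
    ring
  simp only [trace_transpose_mul_eq_sum_sum, dotProduct, ← sq] at key
  exact key

/-- The backward heat kernel identity: for the `k`-dimensional backward heat kernel
`ρ_{(y,s)}(x,t) = (4π(s-t))^{-k/2} exp(-|x-y|²/(4(s-t)))` with `t < s` and any
orthogonal projection `S` onto a `k`-dimensional subspace of `ℝⁿ`,
`(∇²ρ)·S + |(∇ρ)^⊥|²/ρ + ∂ρ/∂t = 0`. -/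
theorem backward_heat_kernel_identity (k n : ℕ) (hk : 0 < k) (hkn : k < n)
    (y : Fin n → ℝ) (s : ℝ)
    (ρ : (Fin n → ℝ) → ℝ → ℝ)
    (hρ : ∀ x t, ρ x t =
      (4 * π * (s - t)) ^ (-(k : ℝ) / 2) * Real.exp (-(∑ i, (x i - y i) ^ 2) / (4 * (s - t))))
    (S : Matrix (Fin n) (Fin n) ℝ)
    (hSsymm : S.IsSymm) (hSproj : S * S = S) (hStrace : S.trace = (k : ℝ))
    (x : Fin n → ℝ) (t : ℝ) (hts : t < s) :
    (∑ i, ∑ j, deriv (fun a => deriv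
        (fun b => ρ (Function.update (Function.update x i a) j b) t)
        ((Function.update x i a) j)) (x i) * S i j)
      + (∑ i, ((deriv (fun b => ρ (Function.update x i b) t) (x i))
          - ∑ j, S i j * (deriv (fun b => ρ (Function.update x j b) t) (x j))) ^ 2) / ρ x t
      + deriv (fun τ => ρ x τ) t = 0 :=
  backward_heat_kernel_identity_general k n y s ρ hρ S hSsymm hSproj hStrace x t hts
end

section
/- Let f = (f_{k+1},...,f_n) : B₁ᵏ → ℝ^{n-k} be differentiable with |∇f| ≤ 1, and let g = (g_{k+1},...,g_n) be differentiable functions of (x₁,...,x_k). At a point x, let S ∈ G(n,k) be the tangent space of the graph of f at (x, f(x)), spanned by the vectors f_j = (e_j, ∂f/∂x_j), and for each l let g_l be the vector (∂g_l/∂x₁,...,∂g_l/∂x_k, 0,...,-1,...,0) with -1 in the l-th slot. Then Σ_{l=k+1}^n |S(g_l)|² ≥ (1/(2k)) |∇f - ∇g|², where S(v) denotes the orthogonal projection of v onto S. -/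
/-!
The tangent vectors `f_j = (e_j, ∂_j f)` span `S`, so `⟪S(g_l), f_j⟫ = ⟪g_l, f_j⟫ = ∂_j g_l - ∂_j f_l`.
Since `|f_j|² = 1 + Σ_l (∂_j f_l)² ≤ 2`, Cauchy–Schwarz gives `(∂_j f_l - ∂_j g_l)² ≤ 2 |S(g_l)|²`;
summing over the `k` indices `j` and over `l` yields the bound.
-/

open scoped RealInnerProductSpace

open Finset

section Projection

variable {E : Type*} [NormedAddCommGroup E] [InnerProductSpace ℝ E]
  (K : Submodule ℝ E) [K.HasOrthogonalProjection]

theorem inner_sq_le_norm_sq_mul_norm_starProjection_sq {v : E} (hv : v ∈ K) (w : E) :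
    ⟪w, v⟫ ^ 2 ≤ ‖v‖ ^ 2 * ‖K.starProjection w‖ ^ 2 := by
  have hproj : ⟪w, v⟫ = ⟪K.starProjection w, v⟫ := by
    rw [K.inner_starProjection_left_eq_right, Submodule.starProjection_eq_self_iff.mpr hv]
  rw [hproj, ← sq_abs, mul_comm, ← mul_pow]
  exact pow_le_pow_left₀ (abs_nonneg _) (abs_real_inner_le_norm _ _) 2

theorem sum_inner_sq_le_card_mul_norm_starProjection_sq {ι : Type*} [Fintype ι] {v : ι → E}
    (hv : ∀ i, v i ∈ K) {c : ℝ} (hc : ∀ i, ‖v i‖ ^ 2 ≤ c) (w : E) :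
    ∑ i, ⟪w, v i⟫ ^ 2 ≤ Fintype.card ι * c * ‖K.starProjection w‖ ^ 2 :=
  calc ∑ i, ⟪w, v i⟫ ^ 2 ≤ ∑ _i : ι, c * ‖K.starProjection w‖ ^ 2 :=
        sum_le_sum fun i _ => (inner_sq_le_norm_sq_mul_norm_starProjection_sq K (hv i) w).trans
          (mul_le_mul_of_nonneg_right (hc i) (sq_nonneg _))
    _ = Fintype.card ι * c * ‖K.starProjection w‖ ^ 2 := by
        rw [sum_const, card_univ, nsmul_eq_mul, mul_assoc]

end Projection

section GraphVectors

variable {k m : ℕ}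

-- `A l j` stands for `∂f_l/∂x_j`; the coordinates `Fin (k + m)` are those of `ℝᵏ × ℝᵐ`.
def graphTangent (A : Fin m → Fin k → ℝ) (j : Fin k) : EuclideanSpace ℝ (Fin (k + m)) :=
  WithLp.toLp 2 (Fin.addCases (fun j' => if j' = j then 1 else 0) fun l => A l j)

def graphNormal (B : Fin m → Fin k → ℝ) (l : Fin m) : EuclideanSpace ℝ (Fin (k + m)) :=
  WithLp.toLp 2 (Fin.addCases (fun j => B l j) fun l' => if l' = l then -1 else 0)

theorem inner_graphNormal_graphTangent (A B : Fin m → Fin k → ℝ) (l : Fin m) (j : Fin k) :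
    ⟪graphNormal B l, graphTangent A j⟫ = B l j - A l j := by
  simp [graphNormal, graphTangent, PiLp.inner_apply, Fin.sum_univ_add, sub_eq_add_neg]

theorem norm_graphTangent_sq (A : Fin m → Fin k → ℝ) (j : Fin k) :
    ‖graphTangent A j‖ ^ 2 = 1 + ∑ l, A l j ^ 2 := by
  simp [graphTangent, EuclideanSpace.norm_sq_eq, Fin.sum_univ_add]

theorem norm_graphTangent_sq_le (A : Fin m → Fin k → ℝ) (j : Fin k) :
    ‖graphTangent A j‖ ^ 2 ≤ 1 + ∑ l, ∑ j, A l j ^ 2 := by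
  rw [norm_graphTangent_sq]
  gcongr with l
  exact single_le_sum (fun _ _ => sq_nonneg _) (mem_univ j)

end GraphVectors

theorem tangent_projection_lower_bound_general (k m : ℕ)
    (Df Dg : (Fin k → ℝ) → Fin m → Fin k → ℝ)
    (x : Fin k → ℝ)
    (hgrad : ∑ l, ∑ j, (Df x l j) ^ 2 ≤ 1)
    (fvec : Fin k → EuclideanSpace ℝ (Fin (k + m)))
    (hfvec : ∀ j i, fvec j i = Fin.addCases (fun j' => if j' = j then (1:ℝ) else 0)
      (fun l' => Df x l' j) i)
    (gvec : Fin m → EuclideanSpace ℝ (Fin (k + m)))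
    (hgvec : ∀ l i, gvec l i = Fin.addCases (fun j => Dg x l j)
      (fun l' => if l' = l then (-1:ℝ) else 0) i) :
    (1 / (2 * (k : ℝ))) * (∑ l, ∑ j, (Df x l j - Dg x l j) ^ 2) ≤
      ∑ l, ‖(Submodule.orthogonalProjection (Submodule.span ℝ (Set.range fvec)) (gvec l) :
        EuclideanSpace ℝ (Fin (k + m)))‖ ^ 2 := by
  obtain rfl : fvec = graphTangent (Df x) := funext fun j => PiLp.ext (hfvec j)
  obtain rfl : gvec = graphNormal (Dg x) := funext fun l => PiLp.ext (hgvec l)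
  set S := Submodule.span ℝ (Set.range (graphTangent (Df x)))
  have hbound (l : Fin m) :
      ∑ j, (Df x l j - Dg x l j) ^ 2 ≤ k * 2 * ‖S.starProjection (graphNormal (Dg x) l)‖ ^ 2 := by
    have := sum_inner_sq_le_card_mul_norm_starProjection_sq S (c := 2)
      (fun j => Submodule.subset_span ⟨j, rfl⟩)
      (fun j => (norm_graphTangent_sq_le (Df x) j).trans (by linarith)) (graphNormal (Dg x) l)
    simpa [inner_graphNormal_graphTangent, sub_sq_comm (Dg x l _)] using this
  rw [one_div_mul_eq_div, mul_comm 2 (k : ℝ)]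
  refine div_le_of_le_mul₀ (by positivity) (by positivity) ?_
  rw [mul_comm _ ((k : ℝ) * 2), mul_sum]
  exact sum_le_sum fun l _ => hbound l

/-- Projection lower bound: if `S` is the tangent plane of the graph of `f` at a point
(spanned by the vectors `(e_j, ∂f/∂x_j)`), `|∇f| ≤ 1`, and for each `l` the vector
`g_l = (∇g_l, 0,…,-1,…,0)` is given, then
`Σ_l |S(g_l)|² ≥ (1/(2k)) |∇f - ∇g|²`. -/
theorem tangent_projection_lower_bound (k m : ℕ) (hk : 0 < k) (hm : 0 < m)
    (f g : (Fin k → ℝ) → Fin m → ℝ)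
    (Df Dg : (Fin k → ℝ) → Fin m → Fin k → ℝ)
    (x : Fin k → ℝ) (hx : ∑ j, (x j) ^ 2 < 1)
    (hDf : ∀ (z : Fin k → ℝ), ∑ j, (z j) ^ 2 < 1 → ∀ (l : Fin m) (j : Fin k),
      HasDerivAt (fun s => f (Function.update z j s) l) (Df z l j) (z j))
    (hDg : ∀ (z : Fin k → ℝ) (l : Fin m) (j : Fin k),
      HasDerivAt (fun s => g (Function.update z j s) l) (Dg z l j) (z j))
    (hgrad : ∑ l, ∑ j, (Df x l j) ^ 2 ≤ 1)
    (fvec : Fin k → EuclideanSpace ℝ (Fin (k + m)))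
    (hfvec : ∀ j i, fvec j i = Fin.addCases (fun j' => if j' = j then (1:ℝ) else 0)
      (fun l' => Df x l' j) i)
    (gvec : Fin m → EuclideanSpace ℝ (Fin (k + m)))
    (hgvec : ∀ l i, gvec l i = Fin.addCases (fun j => Dg x l j)
      (fun l' => if l' = l then (-1:ℝ) else 0) i) :
    (1 / (2 * (k : ℝ))) * (∑ l, ∑ j, (Df x l j - Dg x l j) ^ 2) ≤
      ∑ l, ‖(Submodule.orthogonalProjection (Submodule.span ℝ (Set.range fvec)) (gvec l) :
        EuclideanSpace ℝ (Fin (k + m)))‖ ^ 2 :=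
  tangent_projection_lower_bound_general k m Df Dg x hgrad fvec hfvec gvec hgvec
end

section
/- There exists c₁ = c₁(n,k) such that under the same hypotheses (f differentiable graph with |∇f| ≤ 1, g ∈ ℱ, S the tangent plane of graph f(·,t)), for each l ∈ {k+1,...,n}: ∂g_l/∂t − S·∇²g_l ≤ c₁ |∇f|² |∇²g_l|. -/
/-!
The tangent plane is spanned by `fvec p = e p + w p` with `w p = (0, ∂ₚf)`, and
`∂g_l/∂t = tr ∇²g_l`, so the left-hand side is `∑ M p q * (δ p q - ⟪e p, S (e q)⟫)`.
Since `e p + w p` lies in the plane, `(1 - S) (e p)` has norm at most `‖w p‖`, so the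
`(p, q)` entry is at most `‖w p‖ * ‖w q‖`. Cauchy–Schwarz then gives the inequality with
`c₁ = 1`, because `∑ p, ‖w p‖ ^ 2 = |∇f|²`.
-/

open Finset

section Projection

variable {𝕜 E : Type*} [RCLike 𝕜] [NormedAddCommGroup E] [InnerProductSpace 𝕜 E]
  (K : Submodule 𝕜 E) [K.HasOrthogonalProjection]

theorem norm_sub_starProjection_le_of_add_mem {e w : E} (h : e + w ∈ K) :
    ‖e - K.starProjection e‖ ≤ ‖w‖ := by
  rw [K.starProjection_minimal]
  calc ⨅ x : K, ‖e - x‖ ≤ ‖e - (e + w)‖ :=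
        ciInf_le ⟨0, by rintro _ ⟨x, rfl⟩; positivity⟩ (⟨e + w, h⟩ : K)
    _ = ‖w‖ := by rw [sub_add_cancel_left, norm_neg]

theorem inner_sub_inner_starProjection (u v : E) :
    inner 𝕜 u v - inner 𝕜 u (K.starProjection v) =
      inner 𝕜 (u - K.starProjection u) (v - K.starProjection v) := by
  have hortho : inner 𝕜 (K.starProjection u) (v - K.starProjection v) = 0 :=
    K.inner_right_of_mem_orthogonal (K.starProjection_apply_mem u)
      (K.sub_starProjection_mem_orthogonal v)
  rw [inner_sub_left, hortho, sub_zero, inner_sub_right]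

theorem norm_inner_sub_inner_starProjection_le {e₁ e₂ w₁ w₂ : E} (h₁ : e₁ + w₁ ∈ K)
    (h₂ : e₂ + w₂ ∈ K) :
    ‖inner 𝕜 e₁ e₂ - inner 𝕜 e₁ (K.starProjection e₂)‖ ≤ ‖w₁‖ * ‖w₂‖ := by
  rw [inner_sub_inner_starProjection]
  exact (norm_inner_le_norm _ _).trans <| mul_le_mul
    (norm_sub_starProjection_le_of_add_mem K h₁) (norm_sub_starProjection_le_of_add_mem K h₂)
    (norm_nonneg _) (norm_nonneg _)

end Projection

theorem sum_sum_mul_le_sqrt_mul_sum_sq {ι : Type*} [Fintype ι] (M X : ι → ι → ℝ) (u : ι → ℝ)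
    (hX : ∀ p q, |X p q| ≤ u p * u q) :
    ∑ p, ∑ q, M p q * X p q ≤ √(∑ p, ∑ q, M p q ^ 2) * ∑ p, u p ^ 2 := by
  have hsq : √(∑ p, ∑ q, (u p * u q) ^ 2) = ∑ p, u p ^ 2 := by
    simp_rw [mul_pow, ← mul_sum, ← sum_mul, ← sq]
    exact Real.sqrt_sq (by positivity)
  calc ∑ p, ∑ q, M p q * X p q ≤ ∑ p, ∑ q, |M p q| * (u p * u q) := by
        refine sum_le_sum fun p _ => sum_le_sum fun q _ => ?_
        exact (le_abs_self _).trans ((abs_mul _ _).trans_le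
          (mul_le_mul_of_nonneg_left (hX p q) (abs_nonneg _)))
    _ = ∑ pq : ι × ι, |M pq.1 pq.2| * (u pq.1 * u pq.2) := by
        rw [← univ_product_univ, sum_product]
    _ ≤ √(∑ pq : ι × ι, |M pq.1 pq.2| ^ 2) * √(∑ pq : ι × ι, (u pq.1 * u pq.2) ^ 2) :=
        Real.sum_mul_le_sqrt_mul_sqrt _ _ _
    _ = √(∑ p, ∑ q, M p q ^ 2) * ∑ p, u p ^ 2 := by
        rw [← hsq, ← univ_product_univ, sum_product, sum_product]
        simp only [sq_abs]

theorem sum_sum_addCases_zero_mul {k m : ℕ} (M : Fin k → Fin k → ℝ)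
    (X : Fin (k + m) → Fin (k + m) → ℝ) :
    ∑ i, ∑ i', Fin.addCases (fun p => Fin.addCases (fun q => M p q) (fun _ => (0:ℝ)) i')
        (fun _ => (0:ℝ)) i * X i i' =
      ∑ p, ∑ q, M p q * X (Fin.castAdd m p) (Fin.castAdd m q) := by
  simp [Fin.sum_univ_add]

theorem norm_sub_single_sq_of_eq_addCases {k m : ℕ} {v : EuclideanSpace ℝ (Fin (k + m))}
    {j : Fin k} {d : Fin m → ℝ}
    (hv : ∀ i, v i = Fin.addCases (fun j' => if j' = j then (1:ℝ) else 0) d i) :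
    ‖v - EuclideanSpace.single (Fin.castAdd m j) 1‖ ^ 2 = ∑ l, d l ^ 2 := by
  have hne (l : Fin m) : Fin.natAdd k l ≠ Fin.castAdd m j := by
    simp only [ne_eq, Fin.ext_iff, Fin.val_natAdd, Fin.val_castAdd]
    omega
  rw [EuclideanSpace.norm_sq_eq, Fin.sum_univ_add]
  simp [hv, hne]

theorem g_component_differential_inequality_general (k m : ℕ) :
    ∃ c₁ : ℝ, ∀ (f : (Fin k → ℝ) → ℝ → Fin m → ℝ)
      (Df : (Fin k → ℝ) → ℝ → Fin m → Fin k → ℝ),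
      Continuous (fun p : (Fin k → ℝ) × ℝ => Df p.1 p.2) →
      (∀ (z : Fin k → ℝ) (t : ℝ), ∑ j, (z j) ^ 2 < 1 → t ∈ Set.Ioo (-1 : ℝ) 1 →
        ∀ (l : Fin m) (j : Fin k),
          HasDerivAt (fun s => f (Function.update z j s) t l) (Df z t l j) (z j)) →
      (∀ (z : Fin k → ℝ) (t : ℝ), ∑ j, (z j) ^ 2 < 1 → t ∈ Set.Ioo (-1 : ℝ) 1 →
        ∑ l, ∑ j, (Df z t l j) ^ 2 ≤ 1) →
      ∀ (a b : Fin m → ℝ) (A : Fin m → Fin k → ℝ)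
        (M : Fin m → Matrix (Fin k) (Fin k) ℝ),
      (∀ l, (M l).IsSymm) → (∀ l, b l = ∑ i, M l i i) →
      ∀ (g : Fin m → (Fin k → ℝ) → ℝ → ℝ),
      (∀ l y t, g l y t =
        a l + b l * t + ∑ i, A l i * y i + (1 / 2) * ∑ i, ∑ j, M l i j * y i * y j) →
      ∀ (x : Fin k → ℝ) (t : ℝ), ∑ j, (x j) ^ 2 < 1 → t ∈ Set.Ioo (-1 : ℝ) 1 →
      ∀ (fvec : Fin k → EuclideanSpace ℝ (Fin (k + m))),
      (∀ j i, fvec j i = Fin.addCases (fun j' => if j' = j then (1:ℝ) else 0)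
        (fun l => Df x t l j) i) →
      ∀ l : Fin m,
      deriv (fun τ => g l x τ) t
        - ∑ i, ∑ i', ((Fin.addCases
              (fun p => Fin.addCases (fun q => M l p q) (fun _ => (0:ℝ)) i')
              (fun _ => (0:ℝ)) i)
            * ((Submodule.orthogonalProjectionOnto (Submodule.span ℝ (Set.range fvec))
              (EuclideanSpace.single i' (1:ℝ)) : EuclideanSpace ℝ (Fin (k + m))) i))
      ≤ c₁ * (∑ l', ∑ j, (Df x t l' j) ^ 2)
          * Real.sqrt (∑ i, ∑ j, (M l i j) ^ 2) := by
  refine ⟨1, ?_⟩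
  intro f Df _ _ _ a b A M _ hb g hg x t _ _ fvec hfvec l
  set K := Submodule.span ℝ (Set.range fvec)
  set w : Fin k → EuclideanSpace ℝ (Fin (k + m)) :=
    fun p => fvec p - EuclideanSpace.single (Fin.castAdd m p) 1
  have hmem (p : Fin k) : EuclideanSpace.single (Fin.castAdd m p) 1 + w p ∈ K := by
    simpa [w] using Submodule.subset_span (Set.mem_range_self p)
  have hentry (p q : Fin k) :
      |(if p = q then 1 else 0) -
        K.starProjection (EuclideanSpace.single (Fin.castAdd m q) 1) (Fin.castAdd m p)|
        ≤ ‖w p‖ * ‖w q‖ := by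
    simpa [EuclideanSpace.inner_single_left] using
      norm_inner_sub_inner_starProjection_le (𝕜 := ℝ) K (hmem p) (hmem q)
  have hderiv : deriv (fun τ => g l x τ) t = ∑ p, ∑ q, M l p q * if p = q then 1 else 0 := by
    simp [hg, hb]
  have hw : ∑ p, ‖w p‖ ^ 2 = ∑ l', ∑ j, Df x t l' j ^ 2 := by
    rw [sum_comm]
    exact sum_congr rfl fun p _ => norm_sub_single_sq_of_eq_addCases (hfvec p)
  simp only [Submodule.coe_orthogonalProjectionOnto_apply]
  rw [hderiv, sum_sum_addCases_zero_mul (M l)]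
  simp only [← sum_sub_distrib, ← mul_sub]
  calc _ ≤ √(∑ p, ∑ q, M l p q ^ 2) * ∑ p, ‖w p‖ ^ 2 :=
        sum_sum_mul_le_sqrt_mul_sum_sq _ _ _ hentry
    _ = _ := by rw [hw, one_mul, mul_comm]

/-- There is `c₁ = c₁(n,k)` such that, under the same hypotheses (graph `f` with
`|∇f| ≤ 1`, `g ∈ ℱ`, `S` the tangent plane of graph `f(·,t)`), for each component `g_l`:
`∂g_l/∂t − S·∇²g_l ≤ c₁ |∇f|² |∇²g_l|`. -/
theorem g_component_differential_inequality (k m : ℕ) (hk : 0 < k) (hm : 0 < m) :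
    ∃ c₁ : ℝ, ∀ (f : (Fin k → ℝ) → ℝ → Fin m → ℝ)
      (Df : (Fin k → ℝ) → ℝ → Fin m → Fin k → ℝ),
      Continuous (fun p : (Fin k → ℝ) × ℝ => Df p.1 p.2) →
      (∀ (z : Fin k → ℝ) (t : ℝ), ∑ j, (z j) ^ 2 < 1 → t ∈ Set.Ioo (-1 : ℝ) 1 →
        ∀ (l : Fin m) (j : Fin k),
          HasDerivAt (fun s => f (Function.update z j s) t l) (Df z t l j) (z j)) →
      (∀ (z : Fin k → ℝ) (t : ℝ), ∑ j, (z j) ^ 2 < 1 → t ∈ Set.Ioo (-1 : ℝ) 1 →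
        ∑ l, ∑ j, (Df z t l j) ^ 2 ≤ 1) →
      ∀ (a b : Fin m → ℝ) (A : Fin m → Fin k → ℝ)
        (M : Fin m → Matrix (Fin k) (Fin k) ℝ),
      (∀ l, (M l).IsSymm) → (∀ l, b l = ∑ i, M l i i) →
      ∀ (g : Fin m → (Fin k → ℝ) → ℝ → ℝ),
      (∀ l y t, g l y t =
        a l + b l * t + ∑ i, A l i * y i + (1 / 2) * ∑ i, ∑ j, M l i j * y i * y j) →
      ∀ (x : Fin k → ℝ) (t : ℝ), ∑ j, (x j) ^ 2 < 1 → t ∈ Set.Ioo (-1 : ℝ) 1 →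
      ∀ (fvec : Fin k → EuclideanSpace ℝ (Fin (k + m))),
      (∀ j i, fvec j i = Fin.addCases (fun j' => if j' = j then (1:ℝ) else 0)
        (fun l => Df x t l j) i) →
      ∀ l : Fin m,
      deriv (fun τ => g l x τ) t
        - ∑ i, ∑ i', ((Fin.addCases
              (fun p => Fin.addCases (fun q => M l p q) (fun _ => (0:ℝ)) i')
              (fun _ => (0:ℝ)) i)
            * ((Submodule.orthogonalProjectionOnto (Submodule.span ℝ (Set.range fvec))
              (EuclideanSpace.single i' (1:ℝ)) : EuclideanSpace ℝ (Fin (k + m))) i))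
      ≤ c₁ * (∑ l', ∑ j, (Df x t l' j) ^ 2)
          * Real.sqrt (∑ i, ∑ j, (M l i j) ^ 2) :=
  g_component_differential_inequality_general k m
end
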